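/- Let a : ℝ → ℝ be continuous on [0,1] with 0 < a₀ ≤ a(x) ≤ a₁ for all x ∈ [0,1], and let (u,p) be a classical solution of the damped wave system on [0,T]. Then for every t ∈ [0,T]: ‖u(t,·)‖ ≤ (a₁/a₀)·‖∂ₜp(t,·)‖ + (1/a₀)·‖∂ₜu(t,·)‖, where ‖f‖ = (∫₀¹ f(x)² dx)^{1/2} denotes the L²(0,1) norm in the spatial variable. -/

import Mathlib

open MeasureTheory Set

/-- The L²(0,1) inner product `(f,g) = ∫₀¹ f g dx`. -/
noncomputable def L2ip (f g : ℝ → ℝ) : ℝ := ∫ x in (0:ℝ)..1, f x * g x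

/-- The squared L²(0,1) norm `‖f‖² = ∫₀¹ f² dx`. -/
noncomputable def L2nsq (f : ℝ → ℝ) : ℝ := ∫ x in (0:ℝ)..1, (f x) ^ 2

/-- The L²(0,1) norm. -/
noncomputable def L2nrm (f : ℝ → ℝ) : ℝ := Real.sqrt (L2nsq f)

/-- A classical solution of the damped wave system on `[0,T] × [0,1]`:
`u, p` (time first, space second) with partial derivatives `ut, ux, pt, px`
which are continuous on `[0,T] × [0,1]`, satisfying
`∂ₜ u + ∂ₓ p + a u = 0`, `∂ₜ p + ∂ₓ u = 0` and `p(t,0) = p(t,1) = 0`. -/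
def IsClassicalSolution (T : ℝ) (a : ℝ → ℝ) (u p ut ux pt px : ℝ → ℝ → ℝ) : Prop :=
  (∀ t ∈ Icc (0:ℝ) T, ∀ x ∈ Icc (0:ℝ) 1,
      HasDerivAt (fun s => u s x) (ut t x) t ∧
      HasDerivAt (fun y => u t y) (ux t x) x ∧
      HasDerivAt (fun s => p s x) (pt t x) t ∧
      HasDerivAt (fun y => p t y) (px t x) x) ∧
  ContinuousOn (Function.uncurry ut) (Icc (0:ℝ) T ×ˢ Icc (0:ℝ) 1) ∧
  ContinuousOn (Function.uncurry ux) (Icc (0:ℝ) T ×ˢ Icc (0:ℝ) 1) ∧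
  ContinuousOn (Function.uncurry pt) (Icc (0:ℝ) T ×ˢ Icc (0:ℝ) 1) ∧
  ContinuousOn (Function.uncurry px) (Icc (0:ℝ) T ×ˢ Icc (0:ℝ) 1) ∧
  (∀ t ∈ Icc (0:ℝ) T, ∀ x ∈ Icc (0:ℝ) 1,
      ut t x + px t x + a x * u t x = 0 ∧ pt t x + ux t x = 0) ∧
  (∀ t ∈ Icc (0:ℝ) T, p t 0 = 0 ∧ p t 1 = 0)


/-! Integrating `∂ₜu + ∂ₓp + a u = 0` over `[0,1]` and using `p(t,0) = p(t,1) = 0` gives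
`∫ a u = -∫ ∂ₜu`. For each `x`, `(∫ a) u(x) = ∫ a u + ∫ a(y) (u(x) - u(y)) dy`, and
`|u(x) - u(y)| ≤ ∫ |∂ₓu| ≤ ‖∂ₓu‖ = ‖∂ₜp‖` because `∂ₓu = -∂ₜp`. With `a₀ ≤ ∫ a` and `|a| ≤ a₁`
this bounds `u(t,·)` pointwise by `(a₁ ‖∂ₜp‖ + ‖∂ₜu‖) / a₀`, hence also in `L²(0,1)`. -/

lemma intervalIntegrable_of_continuousOn_Icc {f : ℝ → ℝ} (hf : ContinuousOn f (Icc 0 1)) :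
    IntervalIntegrable f volume 0 1 :=
  ContinuousOn.intervalIntegrable (by rwa [uIcc_of_le zero_le_one])

lemma L2nrm_le_of_abs_le {f : ℝ → ℝ} {M : ℝ} (hf : ContinuousOn f (Icc 0 1))
    (hM : ∀ x ∈ Icc (0:ℝ) 1, |f x| ≤ M) : L2nrm f ≤ M := by
  have hM₀ : 0 ≤ M := (abs_nonneg _).trans (hM 0 (left_mem_Icc.2 zero_le_one))
  refine Real.sqrt_le_iff.2 ⟨hM₀, ?_⟩
  calc L2nsq f ≤ ∫ _ in (0:ℝ)..1, M ^ 2 :=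
        intervalIntegral.integral_mono_on zero_le_one
          (intervalIntegrable_of_continuousOn_Icc (hf.pow 2)) intervalIntegrable_const
          fun x hx => sq_le_sq' (abs_le.1 (hM x hx)).1 (abs_le.1 (hM x hx)).2
    _ = M ^ 2 := by simp

lemma L2nrm_congr_of_abs_eq {f g : ℝ → ℝ} (h : ∀ x ∈ Icc (0:ℝ) 1, |f x| = |g x|) :
    L2nrm f = L2nrm g := by
  unfold L2nrm L2nsq
  congr 1
  refine intervalIntegral.integral_congr fun x hx => ?_
  rw [uIcc_of_le zero_le_one] at hx
  simp only [← sq_abs (f x), ← sq_abs (g x), h x hx]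

lemma sq_integral_abs_le_L2nsq {f : ℝ → ℝ} (hf : ContinuousOn f (Icc 0 1)) :
    (∫ x in (0:ℝ)..1, |f x|) ^ 2 ≤ L2nsq f := by
  set c := ∫ x in (0:ℝ)..1, |f x|
  have hf₁ : IntervalIntegrable (fun x => |f x|) volume 0 1 :=
    intervalIntegrable_of_continuousOn_Icc hf.abs
  have hf₂ : IntervalIntegrable (fun x => f x ^ 2) volume 0 1 :=
    intervalIntegrable_of_continuousOn_Icc (hf.pow 2)
  -- the variance of `|f|` is nonnegative
  have hvar : 0 ≤ ∫ x in (0:ℝ)..1, (|f x| - c) ^ 2 :=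
    intervalIntegral.integral_nonneg zero_le_one fun _ _ => sq_nonneg _
  have hexpand : (∫ x in (0:ℝ)..1, (|f x| - c) ^ 2) = L2nsq f - c ^ 2 := by
    have hpt : (fun x => (|f x| - c) ^ 2) = fun x => (f x ^ 2 - 2 * c * |f x|) + c ^ 2 := by
      ext x; rw [← sq_abs (f x)]; ring
    rw [hpt, intervalIntegral.integral_add (hf₂.sub (hf₁.const_mul _)) intervalIntegrable_const,
      intervalIntegral.integral_sub hf₂ (hf₁.const_mul _), intervalIntegral.integral_const_mul]
    simp only [intervalIntegral.integral_const, L2nsq]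
    ring
  linarith

lemma integral_abs_le_L2nrm {f : ℝ → ℝ} (hf : ContinuousOn f (Icc 0 1)) :
    (∫ x in (0:ℝ)..1, |f x|) ≤ L2nrm f :=
  (le_abs_self _).trans (Real.abs_le_sqrt (sq_integral_abs_le_L2nsq hf))

lemma abs_integral_le_L2nrm {f : ℝ → ℝ} (hf : ContinuousOn f (Icc 0 1)) :
    |∫ x in (0:ℝ)..1, f x| ≤ L2nrm f :=
  (intervalIntegral.abs_integral_le_integral_abs zero_le_one).trans (integral_abs_le_L2nrm hf)

lemma abs_sub_le_integral_abs_deriv {f f' : ℝ → ℝ}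
    (hf : ∀ x ∈ Icc (0:ℝ) 1, HasDerivAt f (f' x) x) (hf' : ContinuousOn f' (Icc 0 1))
    {x y : ℝ} (hx : x ∈ Icc (0:ℝ) 1) (hy : y ∈ Icc (0:ℝ) 1) :
    |f x - f y| ≤ ∫ z in (0:ℝ)..1, |f' z| := by
  have hsub : uIcc y x ⊆ Icc 0 1 := uIcc_subset_Icc hy hx
  have hftc : f x - f y = ∫ z in y..x, f' z :=
    (intervalIntegral.integral_eq_sub_of_hasDerivAt (fun z hz => hf z (hsub hz))
      ((hf'.mono hsub).intervalIntegrable)).symm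
  have hsubIoc : uIoc y x ⊆ uIoc (0:ℝ) 1 :=
    uIoc_subset_uIoc_of_uIcc_subset_uIcc (by rwa [uIcc_of_le zero_le_one])
  calc |f x - f y| ≤ |(∫ z in y..x, |f' z|)| :=
        hftc ▸ intervalIntegral.norm_integral_le_abs_integral_norm (f := f')
    _ ≤ |(∫ z in (0:ℝ)..1, |f' z|)| :=
        intervalIntegral.abs_integral_mono_interval hsubIoc
          (Filter.Eventually.of_forall fun _ => abs_nonneg _)
          (intervalIntegrable_of_continuousOn_Icc hf'.abs)
    _ = ∫ z in (0:ℝ)..1, |f' z| :=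
        abs_of_nonneg (intervalIntegral.integral_nonneg zero_le_one fun _ _ => abs_nonneg _)

lemma integral_mul_sub_eq {a f : ℝ → ℝ} (ha : ContinuousOn a (Icc 0 1))
    (hf : ContinuousOn f (Icc 0 1)) (x : ℝ) :
    (∫ y in (0:ℝ)..1, a y) * f x - ∫ y in (0:ℝ)..1, a y * f y
      = ∫ y in (0:ℝ)..1, a y * (f x - f y) := by
  simp only [mul_sub, ← intervalIntegral.integral_mul_const]
  exact (intervalIntegral.integral_sub
    (intervalIntegrable_of_continuousOn_Icc (ha.mul continuousOn_const))
    (intervalIntegrable_of_continuousOn_Icc (ha.mul hf))).symm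

lemma mul_abs_le_abs_integral_mul_add {a f f' : ℝ → ℝ} {a₀ a₁ : ℝ}
    (ha : ContinuousOn a (Icc 0 1)) (ha₀ : ∀ y ∈ Icc (0:ℝ) 1, a₀ ≤ a y)
    (ha₁ : ∀ y ∈ Icc (0:ℝ) 1, |a y| ≤ a₁)
    (hf : ∀ x ∈ Icc (0:ℝ) 1, HasDerivAt f (f' x) x) (hf' : ContinuousOn f' (Icc 0 1))
    {x : ℝ} (hx : x ∈ Icc (0:ℝ) 1) :
    a₀ * |f x| ≤ |∫ y in (0:ℝ)..1, a y * f y| + a₁ * ∫ y in (0:ℝ)..1, |f' y| := by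
  have hfc : ContinuousOn f (Icc 0 1) := fun y hy => (hf y hy).continuousAt.continuousWithinAt
  set A := ∫ y in (0:ℝ)..1, a y
  have hA : a₀ ≤ A := by
    simpa using intervalIntegral.integral_mono_on zero_le_one intervalIntegrable_const
      (intervalIntegrable_of_continuousOn_Icc ha) ha₀
  have hosc : |∫ y in (0:ℝ)..1, a y * (f x - f y)| ≤ a₁ * ∫ y in (0:ℝ)..1, |f' y| := by
    calc |∫ y in (0:ℝ)..1, a y * (f x - f y)|
        ≤ ∫ y in (0:ℝ)..1, |a y * (f x - f y)| :=
          intervalIntegral.abs_integral_le_integral_abs zero_le_one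
      _ ≤ ∫ _ in (0:ℝ)..1, a₁ * ∫ y in (0:ℝ)..1, |f' y| := by
          refine intervalIntegral.integral_mono_on zero_le_one
            (intervalIntegrable_of_continuousOn_Icc (ha.mul (continuousOn_const.sub hfc)).abs)
            intervalIntegrable_const fun y hy => ?_
          rw [abs_mul]
          exact mul_le_mul (ha₁ y hy) (abs_sub_le_integral_abs_deriv hf hf' hx hy)
            (abs_nonneg _) ((abs_nonneg _).trans (ha₁ y hy))
      _ = a₁ * ∫ y in (0:ℝ)..1, |f' y| := by simp
  have hAf : a₀ * |f x| ≤ |A * f x| := by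
    rw [abs_mul]
    exact mul_le_mul_of_nonneg_right (hA.trans (le_abs_self A)) (abs_nonneg _)
  have htri := abs_sub_abs_le_abs_sub (A * f x) (∫ y in (0:ℝ)..1, a y * f y)
  rw [integral_mul_sub_eq ha hfc] at htri
  linarith

namespace IsClassicalSolution

variable {T : ℝ} {a : ℝ → ℝ} {u p ut ux pt px : ℝ → ℝ → ℝ} {t : ℝ}

lemma hasDerivAt_dx (hsol : IsClassicalSolution T a u p ut ux pt px) (ht : t ∈ Icc 0 T)
    {x : ℝ} (hx : x ∈ Icc (0:ℝ) 1) : HasDerivAt (u t) (ux t x) x :=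
  (hsol.1 t ht x hx).2.1

lemma continuousOn_u (hsol : IsClassicalSolution T a u p ut ux pt px) (ht : t ∈ Icc 0 T) :
    ContinuousOn (u t) (Icc 0 1) :=
  fun _ hx => (hsol.hasDerivAt_dx ht hx).continuousAt.continuousWithinAt

lemma continuousOn_dt (hsol : IsClassicalSolution T a u p ut ux pt px) (ht : t ∈ Icc 0 T) :
    ContinuousOn (ut t) (Icc 0 1) :=
  hsol.2.1.uncurry_left t ht

lemma continuousOn_dx (hsol : IsClassicalSolution T a u p ut ux pt px) (ht : t ∈ Icc 0 T) :
    ContinuousOn (ux t) (Icc 0 1) :=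
  hsol.2.2.1.uncurry_left t ht

lemma integral_mul_eq_neg_integral_dt (hsol : IsClassicalSolution T a u p ut ux pt px)
    (ha : ContinuousOn a (Icc 0 1)) (ht : t ∈ Icc 0 T) :
    ∫ x in (0:ℝ)..1, a x * u t x = -∫ x in (0:ℝ)..1, ut t x := by
  have hau : IntervalIntegrable (fun x => a x * u t x) volume 0 1 :=
    intervalIntegrable_of_continuousOn_Icc (ha.mul (hsol.continuousOn_u ht))
  have hut' := intervalIntegrable_of_continuousOn_Icc (hsol.continuousOn_dt ht)
  obtain ⟨hder, -, -, -, hpx, heq, hbc⟩ := hsol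
  have hpx' := intervalIntegrable_of_continuousOn_Icc (hpx.uncurry_left t ht)
  have hflux : ∫ x in (0:ℝ)..1, px t x = 0 := by
    rw [intervalIntegral.integral_eq_sub_of_hasDerivAt
      (fun x hx => (hder t ht x (uIcc_of_le (zero_le_one' ℝ) ▸ hx)).2.2.2) hpx',
      (hbc t ht).1, (hbc t ht).2, sub_zero]
  have hsum : ∫ x in (0:ℝ)..1, (ut t x + px t x + a x * u t x) = 0 := by
    rw [intervalIntegral.integral_congr (g := fun _ => (0:ℝ))
      fun x hx => (heq t ht x (uIcc_of_le (zero_le_one' ℝ) ▸ hx)).1]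
    simp
  rw [intervalIntegral.integral_add (hut'.add hpx') hau,
    intervalIntegral.integral_add hut' hpx', hflux] at hsum
  linarith

lemma L2nrm_dx_eq (hsol : IsClassicalSolution T a u p ut ux pt px) (ht : t ∈ Icc 0 T) :
    L2nrm (ux t) = L2nrm (pt t) := by
  obtain ⟨-, -, -, -, -, heq, -⟩ := hsol
  exact L2nrm_congr_of_abs_eq fun x hx => by
    rw [eq_neg_of_add_eq_zero_right (heq t ht x hx).2, abs_neg]

end IsClassicalSolution

theorem stmt4_general (T : ℝ) (a : ℝ → ℝ) (a₀ a₁ : ℝ)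
    (ha : ContinuousOn a (Icc (0:ℝ) 1)) (ha₀ : 0 < a₀)
    (hbd : ∀ x ∈ Icc (0:ℝ) 1, a₀ ≤ a x ∧ a x ≤ a₁)
    (u p ut ux pt px : ℝ → ℝ → ℝ)
    (hsol : IsClassicalSolution T a u p ut ux pt px) :
    ∀ t ∈ Icc (0:ℝ) T,
      L2nrm (u t) ≤ (a₁ / a₀) * L2nrm (pt t) + (1 / a₀) * L2nrm (ut t) := by
  intro t ht
  have habs : ∀ x ∈ Icc (0:ℝ) 1, |a x| ≤ a₁ := fun x hx =>
    abs_le.2 ⟨by linarith [hbd x hx], (hbd x hx).2⟩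
  have hpoint : ∀ x ∈ Icc (0:ℝ) 1, |u t x| ≤ (a₁ * L2nrm (pt t) + L2nrm (ut t)) / a₀ := by
    intro x hx
    have hweighted := mul_abs_le_abs_integral_mul_add ha (fun y hy => (hbd y hy).1) habs
      (fun _ hy => hsol.hasDerivAt_dx ht hy) (hsol.continuousOn_dx ht) hx
    rw [hsol.integral_mul_eq_neg_integral_dt ha ht, abs_neg] at hweighted
    have hdt := abs_integral_le_L2nrm (hsol.continuousOn_dt ht)
    have hdx : ∫ y in (0:ℝ)..1, |ux t y| ≤ L2nrm (pt t) :=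
      hsol.L2nrm_dx_eq ht ▸ integral_abs_le_L2nrm (hsol.continuousOn_dx ht)
    have ha₁ : 0 ≤ a₁ := (abs_nonneg _).trans (habs x hx)
    rw [le_div_iff₀ ha₀]
    nlinarith [mul_le_mul_of_nonneg_left hdx ha₁]
  calc L2nrm (u t) ≤ (a₁ * L2nrm (pt t) + L2nrm (ut t)) / a₀ :=
        L2nrm_le_of_abs_le (hsol.continuousOn_u ht) hpoint
    _ = (a₁ / a₀) * L2nrm (pt t) + (1 / a₀) * L2nrm (ut t) := by ring

/-- For classical solutions of the damped wave system with `0 < a₀ ≤ a ≤ a₁`: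
`‖u(t,·)‖ ≤ (a₁/a₀)‖∂ₜp(t,·)‖ + (1/a₀)‖∂ₜu(t,·)‖`. -/
theorem stmt4 (T : ℝ) (hT : 0 < T) (a : ℝ → ℝ) (a₀ a₁ : ℝ)
    (ha : ContinuousOn a (Icc (0:ℝ) 1)) (ha₀ : 0 < a₀)
    (hbd : ∀ x ∈ Icc (0:ℝ) 1, a₀ ≤ a x ∧ a x ≤ a₁)
    (u p ut ux pt px : ℝ → ℝ → ℝ)
    (hsol : IsClassicalSolution T a u p ut ux pt px) :
    ∀ t ∈ Icc (0:ℝ) T,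
      L2nrm (u t) ≤ (a₁ / a₀) * L2nrm (pt t) + (1 / a₀) * L2nrm (ut t) :=
  stmt4_general T a a₀ a₁ ha ha₀ hbd u p ut ux pt px hsol
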